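/- Let σ: ℝ → ℝ be differentiable with σ'(x) > 0 for all x, and let F: ℝ^d → ℝ^d be defined by F(h) = σ(Wh + c) applied componentwise, where W is anti-symmetric and c ∈ ℝ^d is a constant. Then the Jacobian of F at any point h, which equals diag(σ'(Wh+c)) · W, has all eigenvalues purely imaginary. -/
import Mathlib


open Matrix

/-- If `σ` is differentiable with `σ' > 0` everywhere and `W` is anti-symmetric, then
the Jacobian `diag(σ'(Wh + c)) * W` of `h ↦ σ(Wh + c)` (applied componentwise)
has all eigenvalues purely imaginary. -/
theorem jacobian_of_nonlinearity_skew_eigenvalues_purely_imaginary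
    (d : ℕ) (σ : ℝ → ℝ) (hσ : Differentiable ℝ σ) (hσ' : ∀ x, 0 < deriv σ x)
    (W : Matrix (Fin d) (Fin d) ℝ) (hW : Wᵀ = -W)
    (c : Fin d → ℝ) (h : Fin d → ℝ)
    (μ : ℂ) (v : Fin d → ℂ) (hv : v ≠ 0)
    (hev : ((Matrix.diagonal (fun i => deriv σ ((W.mulVec h + c) i)) * W).map
        Complex.ofReal).mulVec v = μ • v) :
    μ.re = 0 := by
  set D : Fin d → ℝ := fun i => deriv σ ((W.mulVec h + c) i) with hD
  have hDpos : ∀ i, 0 < D i := fun i => hσ' _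
  set w : Fin d → ℂ := fun i => ∑ j, (W i j : ℂ) * v j with hw
  have hentry : ∀ i, (D i : ℂ) * w i = μ * v i := by
    intro i
    have h1 := congrFun hev i
    simp only [Matrix.mulVec, Matrix.map_apply, Matrix.diagonal_mul, dotProduct,
      Pi.smul_apply, smul_eq_mul, Complex.ofReal_mul] at h1
    rw [hw]
    rw [← h1, Finset.mul_sum]
    exact Finset.sum_congr rfl fun j _ => by ring
  have hwv : ∀ i, w i = μ * v i / (D i : ℂ) := by
    intro i
    have hne : (D i : ℂ) ≠ 0 := by
      exact_mod_cast (hDpos i).ne'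
    field_simp
    linear_combination hentry i
  set S : ℂ := ∑ i, (starRingEnd ℂ) (v i) * w i with hS
  -- S is purely imaginary
  have hskew : ∀ i j, W j i = - W i j := by
    intro i j
    have := congrFun (congrFun hW i) j
    simpa [Matrix.transpose_apply] using this
  have e1 : (starRingEnd ℂ) S = ∑ i, ∑ j, v i * (W i j : ℂ) * (starRingEnd ℂ) (v j) := by
    rw [hS, map_sum]
    refine Finset.sum_congr rfl fun i _ => ?_
    rw [show w i = ∑ j, (W i j : ℂ) * v j from rfl]
    rw [_root_.map_mul, map_sum, Finset.mul_sum]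
    refine Finset.sum_congr rfl fun j _ => ?_
    rw [_root_.map_mul, Complex.conj_ofReal, Complex.conj_conj]
    ring
  have e2 : -S = ∑ i, ∑ j, (starRingEnd ℂ) (v i) * (-(W i j : ℂ)) * v j := by
    rw [hS, ← Finset.sum_neg_distrib]
    refine Finset.sum_congr rfl fun i _ => ?_
    rw [show w i = ∑ j, (W i j : ℂ) * v j from rfl]
    rw [Finset.mul_sum, ← Finset.sum_neg_distrib]
    exact Finset.sum_congr rfl fun j _ => by ring
  have hconjS : (starRingEnd ℂ) S = -S := by
    rw [e1, e2, Finset.sum_comm]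
    refine Finset.sum_congr rfl fun i _ => Finset.sum_congr rfl fun j _ => ?_
    rw [hskew j i]
    push_cast
    ring
  have hSre : S.re = 0 := by
    have := congrArg Complex.re hconjS
    simp [Complex.conj_re] at this
    linarith
  -- S = μ * T with T > 0
  set T : ℝ := ∑ i, Complex.normSq (v i) / D i with hT
  have hST : S = μ * (T : ℂ) := by
    rw [hS, hT]
    push_cast
    rw [Finset.mul_sum]
    refine Finset.sum_congr rfl fun i _ => ?_
    have hne : (D i : ℂ) ≠ 0 := by exact_mod_cast (hDpos i).ne'
    rw [hwv i, Complex.normSq_eq_conj_mul_self]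
    field_simp
  have hTpos : 0 < T := by
    obtain ⟨i, hi⟩ := Function.ne_iff.mp hv
    refine Finset.sum_pos' (fun j _ => div_nonneg (Complex.normSq_nonneg _) (hDpos j).le)
      ⟨i, Finset.mem_univ i, div_pos (Complex.normSq_pos.mpr hi) (hDpos i)⟩
  have : S.re = μ.re * T := by
    rw [hST]
    simp [Complex.mul_re]
  have := hSre ▸ this
  exact (mul_eq_zero.mp this.symm).resolve_right hTpos.ne'
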